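/- Let C ≥ 2, d ≥ 1, 0 ≤ γ < 1, and let D = {(x_i, y_i)}_{i=1}^{N} be a dataset with x_i ∈ [−1, 1]^d and y_i ∈ {1, …, C}. Let 𝒲_γ be the set of matrices W ∈ ℝ^{C×d} whose rows each have ℓ₂ norm exactly √d and whose distinct rows have pairwise cosine similarity at most γ, and assume 𝒲_γ is nonempty. Let α = inf over W ∈ 𝒲_γ of (1/N) Σ_{i=1}^{N} ℒ(x_i, y_i; W). Then for every ε > 0 there exist a matrix W ∈ 𝒲_γ and perturbations δ_1, …, δ_N ∈ ℝ^d such that (i) for every i and every c ≠ y_i, ⟨W_{y_i}, x_i + δ_i⟩ > ⟨W_c, x_i + δ_i⟩ (the poisoned dataset {(x_i + δ_i, y_i)} is linearly separable by W), and (ii) (2/N) Σ_{i=1}^{N} ‖δ_i‖₂² ≤ 32α/(1 − γ)² + ε. -/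

import Mathlib

open scoped BigOperators

/-- The margin loss `ℒ(x, y; W) = max(max_{t ≠ y} ⟨W_t, x⟩ − ⟨W_y, x⟩, 0)`
of a linear classifier with weight rows `W_c`. -/
noncomputable def marginLoss {C d : ℕ} (W : Fin C → EuclideanSpace ℝ (Fin d))
    (x : EuclideanSpace ℝ (Fin d)) (y : Fin C) : ℝ :=
  max (⨆ t : {t : Fin C // t ≠ y}, ((inner ℝ (W t.1) x : ℝ) - (inner ℝ (W y) x : ℝ))) 0

/-!
Take `W ∈ 𝒲_γ` whose average margin loss is within a small slack of `α` and push every `xᵢ`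
along its own class row, `δᵢ = tᵢ • W_{yᵢ}`. As `‖W_{yᵢ}‖² = d` while `⟨W_c, W_{yᵢ}⟩ ≤ γ d`, this
raises the logit of `yᵢ` by at least `(1 − γ) d tᵢ` more than any other logit, so
`tᵢ = (ℒᵢ + η) / ((1 − γ) d)` separates `xᵢ + δᵢ` with margin `η > 0`. The cost is
`‖δᵢ‖² = (ℒᵢ + η)² / ((1 − γ)² d)`, and since `xᵢ ∈ [−1, 1]^d` bounds every logit by `d`, we have
`ℒᵢ ≤ 2d`, which makes this cost linear in `ℒᵢ` up to the `η²` term.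
-/

open scoped RealInnerProductSpace

theorem inner_lt_inner_add_smul {E : Type*} [NormedAddCommGroup E] [InnerProductSpace ℝ E]
    {u v x : E} {γ t : ℝ} (hvu : ⟪v, u⟫ ≤ γ * ‖u‖ ^ 2) (ht : 0 ≤ t)
    (hx : ⟪v, x⟫ - ⟪u, x⟫ < t * ((1 - γ) * ‖u‖ ^ 2)) :
    ⟪v, x + t • u⟫ < ⟪u, x + t • u⟫ := by
  simp only [inner_add_right, real_inner_smul_right, real_inner_self_eq_norm_sq]
  nlinarith [mul_le_mul_of_nonneg_left hvu ht]

theorem EuclideanSpace.norm_le_sqrt_card {ι : Type*} [Fintype ι] {x : EuclideanSpace ℝ ι}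
    (hx : ∀ j, |x j| ≤ 1) : ‖x‖ ≤ √(Fintype.card ι) := by
  rw [EuclideanSpace.norm_eq]
  gcongr
  calc ∑ j, ‖x j‖ ^ 2 ≤ ∑ _j : ι, (1 : ℝ) := by
        gcongr with j
        exact pow_le_one₀ (norm_nonneg _) (hx j)
    _ = Fintype.card ι := by simp

section MarginLoss

variable {C d : ℕ} (W : Fin C → EuclideanSpace ℝ (Fin d)) (x : EuclideanSpace ℝ (Fin d))
  (y : Fin C)

theorem marginLoss_nonneg : 0 ≤ marginLoss W x y :=
  le_max_right _ _

theorem inner_sub_inner_le_marginLoss {c : Fin C} (hc : c ≠ y) :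
    ⟪W c, x⟫ - ⟪W y, x⟫ ≤ marginLoss W x y :=
  (le_ciSup (f := fun t : {t // t ≠ y} => ⟪W t, x⟫ - ⟪W y, x⟫) (Set.finite_range _).bddAbove
    ⟨c, hc⟩).trans (le_max_left _ _)

theorem marginLoss_le_two_mul {B : ℝ} (hB : ∀ c, |⟪W c, x⟫| ≤ B) :
    marginLoss W x y ≤ 2 * B := by
  have hB0 : 0 ≤ B := (abs_nonneg _).trans (hB y)
  refine max_le (Real.iSup_le (fun t => ?_) (by positivity)) (by positivity)
  linarith [abs_le.mp (hB t), abs_le.mp (hB y)]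

noncomputable def marginPoison (γ η : ℝ) : EuclideanSpace ℝ (Fin d) :=
  ((marginLoss W x y + η) / ((1 - γ) * d)) • W y

variable {W x y} {γ η : ℝ}

theorem inner_lt_inner_add_marginPoison (hW : ∀ c, ‖W c‖ = √d)
    (hWW : ∀ c c', c ≠ c' → ⟪W c, W c'⟫ ≤ γ * d) (hγ : γ < 1) (hd : 0 < d) (hη : 0 < η)
    {c : Fin C} (hc : c ≠ y) :
    ⟪W c, x + marginPoison W x y γ η⟫ < ⟪W y, x + marginPoison W x y γ η⟫ := by
  have hWy : ‖W y‖ ^ 2 = d := by rw [hW, Real.sq_sqrt d.cast_nonneg]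
  have hpos : 0 < (1 - γ) * d := mul_pos (by linarith) (by exact_mod_cast hd)
  refine inner_lt_inner_add_smul (by rw [hWy]; exact hWW c y hc)
    (div_nonneg (by linarith [marginLoss_nonneg W x y]) hpos.le) ?_
  rw [hWy, div_mul_cancel₀ _ hpos.ne']
  linarith [inner_sub_inner_le_marginLoss W x y hc]

theorem norm_marginPoison_sq_le (hW : ∀ c, ‖W c‖ = √d) (hx : ‖x‖ ≤ √d) (hd : 0 < d) :
    ‖marginPoison W x y γ η‖ ^ 2 ≤ (4 * marginLoss W x y + 2 * η ^ 2) / (1 - γ) ^ 2 := by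
  have hd1 : (1 : ℝ) ≤ d := by exact_mod_cast hd
  have hsqrt : √d * √d = (d : ℝ) := Real.mul_self_sqrt d.cast_nonneg
  have hlogit : ∀ c, |⟪W c, x⟫| ≤ d := fun c =>
    calc |⟪W c, x⟫| ≤ ‖W c‖ * ‖x‖ := abs_real_inner_le_norm _ _
      _ ≤ √d * √d := by rw [hW c]; gcongr
      _ = d := hsqrt
  have hnorm : ‖marginPoison W x y γ η‖ ^ 2 = (marginLoss W x y + η) ^ 2 / d / (1 - γ) ^ 2 := by
    rw [marginPoison, norm_smul, mul_pow, hW, sq (√_), hsqrt, Real.norm_eq_abs, sq_abs]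
    field_simp
  set L := marginLoss W x y
  have hL0 : 0 ≤ L := marginLoss_nonneg W x y
  have hL : L ≤ 2 * d := marginLoss_le_two_mul W x y hlogit
  rw [hnorm]
  gcongr
  rw [div_le_iff₀ (by positivity)]
  nlinarith [sq_nonneg (L - η), sq_nonneg η]

theorem two_div_mul_sum_norm_marginPoison_sq_le {N : ℕ} {x : Fin N → EuclideanSpace ℝ (Fin d)}
    {y : Fin N → Fin C} (hW : ∀ c, ‖W c‖ = √d) (hx : ∀ i, ‖x i‖ ≤ √d) (hd : 0 < d) :
    (2 / N : ℝ) * ∑ i, ‖marginPoison W (x i) (y i) γ η‖ ^ 2 ≤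
      (8 * ((1 / N : ℝ) * ∑ i, marginLoss W (x i) (y i)) + 4 * η ^ 2) / (1 - γ) ^ 2 :=
  calc (2 / N : ℝ) * ∑ i, ‖marginPoison W (x i) (y i) γ η‖ ^ 2
      ≤ (2 / N : ℝ) * ∑ i, (4 * marginLoss W (x i) (y i) + 2 * η ^ 2) / (1 - γ) ^ 2 := by
        gcongr with i
        exact norm_marginPoison_sq_le hW (hx i) hd
    _ = (8 * ((1 / N : ℝ) * ∑ i, marginLoss W (x i) (y i)) + 4 * η ^ 2 * (N / N)) /
          (1 - γ) ^ 2 := by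
        rw [← Finset.sum_div, Finset.sum_add_distrib, ← Finset.mul_sum]
        simp only [Finset.sum_const, Finset.card_univ, Fintype.card_fin, nsmul_eq_mul]
        ring
    _ ≤ _ := by
        gcongr (_ + ?_) / _
        exact mul_le_of_le_one_right (by positivity) (div_self_le_one _)

end MarginLoss

theorem separable_poisons_of_small_distortion_general
    (C d N : ℕ) (hd : 1 ≤ d)
    (γ : ℝ) (hγ1 : γ < 1)
    (x : Fin N → EuclideanSpace ℝ (Fin d)) (hx : ∀ i j, |x i j| ≤ 1)
    (y : Fin N → Fin C)
    (Wset : Set (Fin C → EuclideanSpace ℝ (Fin d)))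
    (hWset : Wset = {W | (∀ c, ‖W c‖ = Real.sqrt d) ∧
      ∀ c c', c ≠ c' → (inner ℝ (W c) (W c') : ℝ) ≤ γ * d})
    (hne : Wset.Nonempty)
    (α : ℝ)
    (hα : α = ⨅ W : Wset, (1 / N : ℝ) * ∑ i : Fin N, marginLoss W.1 (x i) (y i)) :
    ∀ ε > 0, ∃ W ∈ Wset, ∃ δ : Fin N → EuclideanSpace ℝ (Fin d),
      (∀ i, ∀ c, c ≠ y i →
        (inner ℝ (W (y i)) (x i + δ i) : ℝ) > (inner ℝ (W c) (x i + δ i) : ℝ)) ∧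
      (2 / N : ℝ) * ∑ i : Fin N, ‖δ i‖ ^ 2 ≤ 32 * α / (1 - γ) ^ 2 + ε := by
  intro ε hε
  have hγ : 0 < (1 - γ) ^ 2 := pow_pos (sub_pos.2 hγ1) 2
  have hα0 : 0 ≤ α := hα ▸ Real.iInf_nonneg fun W =>
    mul_nonneg (by positivity) (Finset.sum_nonneg fun i _ => marginLoss_nonneg _ _ _)
  have : Nonempty Wset := hne.to_subtype
  -- The slack in the loss and the margin `η` each contribute `ε / 2` to the distortion.
  obtain ⟨⟨W, hW⟩, hWα⟩ : ∃ W : Wset,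
      (1 / N : ℝ) * ∑ i, marginLoss W.1 (x i) (y i) < α + ε * (1 - γ) ^ 2 / 16 :=
    exists_lt_of_ciInf_lt (by rw [← hα]; linarith [mul_pos hε hγ])
  obtain ⟨hnorm, hinner⟩ : W ∈ {W | _ ∧ _} := hWset ▸ hW
  have hxd : ∀ i, ‖x i‖ ≤ √d := fun i => by
    simpa using EuclideanSpace.norm_le_sqrt_card (hx i)
  set η := √(ε * (1 - γ) ^ 2 / 8)
  have hη : η ^ 2 = ε * (1 - γ) ^ 2 / 8 := Real.sq_sqrt (by positivity)
  refine ⟨W, hW, fun i => marginPoison W (x i) (y i) γ η, fun i c hc =>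
    inner_lt_inner_add_marginPoison hnorm hinner hγ1 hd (Real.sqrt_pos.2 (by positivity)) hc, ?_⟩
  calc (2 / N : ℝ) * ∑ i, ‖marginPoison W (x i) (y i) γ η‖ ^ 2
      ≤ (8 * ((1 / N : ℝ) * ∑ i, marginLoss W (x i) (y i)) + 4 * η ^ 2) / (1 - γ) ^ 2 :=
        two_div_mul_sum_norm_marginPoison_sq_le hnorm hxd hd
    _ ≤ (8 * (α + ε * (1 - γ) ^ 2 / 16) + 4 * η ^ 2) / (1 - γ) ^ 2 := by gcongr
    _ ≤ 32 * α / (1 - γ) ^ 2 + ε := by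
        rw [div_add' _ _ _ hγ.ne', div_le_div_iff_of_pos_right hγ, hη]
        linarith

/-- existence of linearly separable poisons of small total
distortion. With `𝒲_γ` the set of weight matrices with rows of norm `√d` and
pairwise cosine similarity at most `γ`, and `α` the infimum over `𝒲_γ` of the
average margin loss on the dataset, for every `ε > 0` there exist `W ∈ 𝒲_γ`
and perturbations `δᵢ` such that the poisoned dataset is linearly separable by
`W` and `(2/N) Σᵢ ‖δᵢ‖² ≤ 32α/(1−γ)² + ε`. -/
theorem separable_poisons_of_small_distortion
    (C d N : ℕ) (hC : 2 ≤ C) (hd : 1 ≤ d) (hN : 1 ≤ N)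
    (γ : ℝ) (hγ0 : 0 ≤ γ) (hγ1 : γ < 1)
    (x : Fin N → EuclideanSpace ℝ (Fin d)) (hx : ∀ i j, |x i j| ≤ 1)
    (y : Fin N → Fin C)
    (Wset : Set (Fin C → EuclideanSpace ℝ (Fin d)))
    (hWset : Wset = {W | (∀ c, ‖W c‖ = Real.sqrt d) ∧
      ∀ c c', c ≠ c' → (inner ℝ (W c) (W c') : ℝ) ≤ γ * d})
    (hne : Wset.Nonempty)
    (α : ℝ)
    (hα : α = ⨅ W : Wset, (1 / N : ℝ) * ∑ i : Fin N, marginLoss W.1 (x i) (y i)) :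
    ∀ ε > 0, ∃ W ∈ Wset, ∃ δ : Fin N → EuclideanSpace ℝ (Fin d),
      (∀ i, ∀ c, c ≠ y i →
        (inner ℝ (W (y i)) (x i + δ i) : ℝ) > (inner ℝ (W c) (x i + δ i) : ℝ)) ∧
      (2 / N : ℝ) * ∑ i : Fin N, ‖δ i‖ ^ 2 ≤ 32 * α / (1 - γ) ^ 2 + ε :=
  separable_poisons_of_small_distortion_general C d N hd γ hγ1 x hx y Wset hWset hne α hα
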